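/- Let **A** = Σ_{γ=1}^N B^γ ⊗ A^γ ∈ ℝ^{Nn×Nn}_s satisfy the structural hypothesis (SH), and assume in addition that all the positive definite matrices A¹,…,A^N have the same smallest eigenvalue λ₁ and admit a common unit eigenvector ā with A^γ ā = λ₁ ā for all γ. Then the ellipticity constant of **A** satisfies ν(**A**) = ( min_{γ=1,…,N} min_{|a|=1} A^γ:a⊗a ) · min_{|η|=1} (B¹+⋯+B^N) : η⊗η = λ₁ · λ₁(B¹+⋯+B^N). -/

import Mathlib

open MeasureTheory Filter Topology
open scoped BigOperators

noncomputable section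

/-- `Euc n` is the Euclidean space `ℝⁿ`. -/
abbrev Euc (n : ℕ) : Type := EuclideanSpace ℝ (Fin n)

/-- Squared Euclidean norm of a finite vector. -/
def vsq {m : ℕ} (v : Fin m → ℝ) : ℝ := ∑ i, (v i) ^ 2

/-- Squared Euclidean norm of a third order tensor `X ∈ ℝ^{N×n×n}`. -/
def tsq {N n : ℕ} (X : Fin N → Fin n → Fin n → ℝ) : ℝ :=
  ∑ α, ∑ i, ∑ j, (X α i j) ^ 2

/-- First partial derivative `D_i f`. -/
def pder {n : ℕ} (f : Euc n → ℝ) (i : Fin n) (x : Euc n) : ℝ :=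
  fderiv ℝ f x (EuclideanSpace.single i 1)

/-- Second partial derivative `D²_{ij} f`. -/
def pder2 {n : ℕ} (f : Euc n → ℝ) (i j : Fin n) (x : Euc n) : ℝ :=
  pder (fun y => pder f j y) i x

/-- Hessian tensor `D²u(x) ∈ ℝ^{Nn²}` of a vector valued map `u : ℝⁿ → ℝ^N`. -/
def Hess {n N : ℕ} (u : Euc n → Fin N → ℝ) (x : Euc n) : Fin N → Fin n → Fin n → ℝ :=
  fun α i j => pder2 (fun y => u y α) i j x

/-- The contraction `(𝐀:X)_α = Σ_{i,β,j} A_{αiβj} X_{βij}`. -/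
def AC {n N : ℕ} (A : Fin N → Fin n → Fin N → Fin n → ℝ)
    (X : Fin N → Fin n → Fin n → ℝ) : Fin N → ℝ :=
  fun α => ∑ i, ∑ β, ∑ j, A α i β j * X β i j

/-- The quadratic form `𝐀 : η⊗a⊗η⊗a = Σ A_{αiβj} η_α a_i η_β a_j`. -/
def QF {n N : ℕ} (A : Fin N → Fin n → Fin N → Fin n → ℝ)
    (η : Fin N → ℝ) (a : Fin n → ℝ) : ℝ :=
  ∑ α, ∑ i, ∑ β, ∑ j, A α i β j * η α * a i * η β * a j

/-- Symmetry `A_{αiβj} = A_{βjαi}` of a fourth order tensor (i.e. `𝐀 ∈ ℝ^{Nn×Nn}_s`). -/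
def SymT {n N : ℕ} (A : Fin N → Fin n → Fin N → Fin n → ℝ) : Prop :=
  ∀ α i β j, A α i β j = A β j α i

/-- Symmetry `X_{αij} = X_{αji}`, i.e. `X ∈ ℝ^{Nn²}_s`. -/
def SymX {n N : ℕ} (X : Fin N → Fin n → Fin n → ℝ) : Prop :=
  ∀ α i j, X α i j = X α j i

/-- `𝐀` is rank-one positive: `𝐀:η⊗a⊗η⊗a ≥ ν |η|²|a|²` for some `ν > 0`. -/
def RankOnePos {n N : ℕ} (A : Fin N → Fin n → Fin N → Fin n → ℝ) : Prop :=
  ∃ ν > (0:ℝ), ∀ (η : Fin N → ℝ) (a : Fin n → ℝ), ν * vsq η * vsq a ≤ QF A η a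

/-- The ellipticity constant `ν(𝐀) = min_{|η|=|a|=1} 𝐀:η⊗a⊗η⊗a`. -/
def nuA {n N : ℕ} (A : Fin N → Fin n → Fin N → Fin n → ℝ) : ℝ :=
  sInf {v | ∃ (η : Fin N → ℝ) (a : Fin n → ℝ), vsq η = 1 ∧ vsq a = 1 ∧ v = QF A η a}

/-- The smallest eigenvalue `λ₁(M) = min_{|a|=1} M:a⊗a` of a symmetric matrix. -/
def lam1 {m : ℕ} (M : Matrix (Fin m) (Fin m) ℝ) : ℝ :=
  sInf {v | ∃ a : Fin m → ℝ, vsq a = 1 ∧ v = ∑ i, ∑ j, M i j * a i * a j}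

/-- The structural hypothesis (SH) for `𝐀` with the decomposition data
`𝐀 = Σ_γ B^γ ⊗ A^γ` given explicitly. -/
def SHdata {n N : ℕ} (A : Fin N → Fin n → Fin N → Fin n → ℝ)
    (B : Fin N → Matrix (Fin N) (Fin N) ℝ)
    (M : Fin N → Matrix (Fin n) (Fin n) ℝ) : Prop :=
  (∀ γ, (B γ).IsSymm) ∧ (∀ γ, (M γ).IsSymm) ∧
  (∀ α i β j, A α i β j = ∑ γ, B γ α β * M γ i j) ∧
  (∀ γ δ, γ ≠ δ → ∀ y z : Fin N → ℝ, ∑ α, (B γ).mulVec y α * (B δ).mulVec z α = 0) ∧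
  (∑ γ, B γ).PosDef ∧ (∀ γ, (M γ).PosDef) ∧
  (∃ a : Fin n → ℝ, a ≠ 0 ∧ ∀ γ, (M γ).mulVec a = lam1 (M γ) • a)

/-- The structural hypothesis (SH). -/
def SH {n N : ℕ} (A : Fin N → Fin n → Fin N → Fin n → ℝ) : Prop :=
  ∃ B M, SHdata A B M

/-- `Ω` is a (bounded) domain with `C²` boundary, encoded via a `C²` defining function
with nonvanishing gradient on the boundary. -/
def IsC2Domain {n : ℕ} (Ω : Set (Euc n)) : Prop :=
  ∃ ρ : Euc n → ℝ, ContDiff ℝ 2 ρ ∧ Ω = {x | ρ x < 0} ∧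
    ∀ x ∈ frontier Ω, fderiv ℝ ρ x ≠ 0

/-- `F : Ω × ℝ^{Nn²}_s → ℝ^N` is a Carathéodory map: measurable in `x`, continuous in `X`. -/
def Caratheodory {n N : ℕ} (Ω : Set (Euc n))
    (F : Euc n → (Fin N → Fin n → Fin n → ℝ) → Fin N → ℝ) : Prop :=
  (∀ X, Measurable fun x => F x X) ∧
  (∀ᵐ x ∂(volume.restrict Ω), Continuous fun X => F x X)

/-- The K-condition (ellipticity) for `F` with data `(𝐀, α, β, γ)`. -/
def KCond {n N : ℕ} (Ω : Set (Euc n))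
    (F : Euc n → (Fin N → Fin n → Fin n → ℝ) → Fin N → ℝ)
    (A : Fin N → Fin n → Fin N → Fin n → ℝ)
    (al : Euc n → ℝ) (β γ : ℝ) : Prop :=
  SymT A ∧ RankOnePos A ∧ Measurable al ∧
  (∃ C : ℝ, ∀ᵐ x ∂(volume.restrict Ω), |al x| ≤ C) ∧
  (∀ᵐ x ∂(volume.restrict Ω), 0 < al x) ∧
  (∃ C : ℝ, ∀ᵐ x ∂(volume.restrict Ω), |1 / al x| ≤ C) ∧
  0 < β ∧ 0 < γ ∧ β + γ < 1 ∧
  (∀ᵐ x ∂(volume.restrict Ω), ∀ X Z : Fin N → Fin n → Fin n → ℝ, SymX X → SymX Z →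
    Real.sqrt (vsq fun α => AC A Z α - al x * (F x (X + Z) α - F x X α)) ≤
      β * nuA A * Real.sqrt (tsq Z) + γ * Real.sqrt (vsq (AC A Z)))

/-- Membership `u ∈ (H² ∩ H¹₀)(Ω)^N` (as a strong/classical object): twice
differentiable on `Ω`, with `u`, `Du`, `D²u` square integrable on `Ω`, and zero
boundary trace. -/
structure IsH2H10 {n N : ℕ} (Ω : Set (Euc n)) (u : Euc n → Fin N → ℝ) : Prop where
  contDiffOn : ∀ α, ContDiffOn ℝ 2 (fun x => u x α) Ω
  memL2 : IntegrableOn (fun x => vsq (u x)) Ω volume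
  grad_memL2 : IntegrableOn (fun x => ∑ α, ∑ i, (pder (fun y => u y α) i x) ^ 2) Ω volume
  hess_memL2 : IntegrableOn (fun x => tsq (Hess u x)) Ω volume
  zero_trace : ∀ x ∈ frontier Ω, Tendsto u (nhdsWithin x Ω) (nhds 0)

/-- The `L²(Ω)^N` norm of a vector valued map. -/
def L2V {n N : ℕ} (Ω : Set (Euc n)) (g : Euc n → Fin N → ℝ) : ℝ :=
  Real.sqrt (∫ x in Ω, vsq (g x))

/-- The `L²(Ω)` norm of a tensor valued map. -/
def L2T {n N : ℕ} (Ω : Set (Euc n)) (G : Euc n → Fin N → Fin n → Fin n → ℝ) : ℝ :=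
  Real.sqrt (∫ x in Ω, tsq (G x))

/-- The `H²(Ω)^N` norm `‖u‖_{L²} + ‖Du‖_{L²} + ‖D²u‖_{L²}`. -/
def H2norm {n N : ℕ} (Ω : Set (Euc n)) (u : Euc n → Fin N → ℝ) : ℝ :=
  L2V Ω u + Real.sqrt (∫ x in Ω, ∑ α, ∑ i, (pder (fun y => u y α) i x) ^ 2) +
    L2T Ω (fun x => Hess u x)

end

/-!
Orthogonality of the ranges gives `B^γ B^δ = 0` for `γ ≠ δ`, so every `B^γ` commutes with
`S = B¹ + ⋯ + B^N` and `B^γ = B^γ S⁻¹ B^γ` is positive semidefinite. Writing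
`𝐀:η⊗a⊗η⊗a = Σ_γ (B^γ:η⊗η)(A^γ:a⊗a)`, the first factors are nonnegative and the second ones
are at least `λ₁`, so the form is at least `λ₁ (S:η⊗η) ≥ λ₁ λ₁(S)` on unit vectors; the common
eigenvector `ā` turns the form into exactly `λ₁ (S:η⊗η)`, which gives the reverse inequality.
-/

open Matrix

section QuadraticForm

variable {m : ℕ}

lemma vsq_eq_dotProduct (v : Fin m → ℝ) : vsq v = v ⬝ᵥ v := by
  simp [vsq, dotProduct, sq]

lemma ne_zero_of_vsq_eq_one {v : Fin m → ℝ} (h : vsq v = 1) : v ≠ 0 := by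
  rintro rfl
  simp [vsq] at h

lemma exists_vsq_eq_one (hm : 0 < m) : ∃ v : Fin m → ℝ, vsq v = 1 :=
  ⟨Pi.single ⟨0, hm⟩ 1, by simp [vsq, Pi.single_apply]⟩

lemma sum_sum_mul_eq_dotProduct_mulVec (M : Matrix (Fin m) (Fin m) ℝ) (v : Fin m → ℝ) :
    ∑ i, ∑ j, M i j * v i * v j = v ⬝ᵥ M *ᵥ v := by
  simp only [dotProduct, mulVec, Finset.mul_sum]
  exact Finset.sum_congr rfl fun i _ => Finset.sum_congr rfl fun j _ => by ring

lemma lam1_le_dotProduct_mulVec {M : Matrix (Fin m) (Fin m) ℝ} (hM : M.PosSemidef)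
    {a : Fin m → ℝ} (ha : vsq a = 1) : lam1 M ≤ a ⬝ᵥ M *ᵥ a := by
  refine csInf_le ⟨0, ?_⟩ ⟨a, ha, (sum_sum_mul_eq_dotProduct_mulVec M a).symm⟩
  rintro v ⟨b, -, rfl⟩
  rw [sum_sum_mul_eq_dotProduct_mulVec]
  exact hM.dotProduct_mulVec_nonneg b

lemma le_lam1 {M : Matrix (Fin m) (Fin m) ℝ} {c : ℝ} {a₀ : Fin m → ℝ} (ha₀ : vsq a₀ = 1)
    (h : ∀ a, vsq a = 1 → c ≤ a ⬝ᵥ M *ᵥ a) : c ≤ lam1 M := by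
  refine le_csInf ⟨_, a₀, ha₀, rfl⟩ ?_
  rintro v ⟨a, ha, rfl⟩
  rw [sum_sum_mul_eq_dotProduct_mulVec]
  exact h a ha

end QuadraticForm

lemma Matrix.mul_eq_zero_of_mulVec_orthogonal {m : Type*} [Fintype m] [DecidableEq m]
    {B C : Matrix m m ℝ} (hB : B.IsSymm) (h : ∀ y z, (B *ᵥ y) ⬝ᵥ (C *ᵥ z) = 0) :
    B * C = 0 := by
  ext α β
  simpa [mulVec_single_one, dotProduct, mul_apply, ← hB.apply α] using
    h (Pi.single α 1) (Pi.single β 1)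

lemma Matrix.posSemidef_of_pairwise_mul_eq_zero {ι m : Type*} [Fintype ι] [DecidableEq ι]
    [Fintype m] [DecidableEq m] {B : ι → Matrix m m ℝ} (hB : ∀ γ, (B γ).IsHermitian)
    (horth : Pairwise fun γ δ => B γ * B δ = 0) (hS : (∑ γ, B γ).PosDef) (γ : ι) :
    (B γ).PosSemidef := by
  set S := ∑ γ, B γ
  have hdet : IsUnit S.det := hS.isUnit.map detMonoidHom
  have hSB : S * B γ = B γ * B γ := by
    rw [Finset.sum_mul, Finset.sum_eq_single γ (fun δ _ h => horth h) (by simp)]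
  have hBS : B γ * S = B γ * B γ := by
    rw [Finset.mul_sum, Finset.sum_eq_single γ (fun δ _ h => horth h.symm) (by simp)]
  have hcomm : B γ * S⁻¹ = S⁻¹ * B γ :=
    calc B γ * S⁻¹ = S⁻¹ * (S * B γ) * S⁻¹ := by
          rw [← mul_assoc, nonsing_inv_mul _ hdet, one_mul]
      _ = S⁻¹ * (B γ * S) * S⁻¹ := by rw [hSB, hBS]
      _ = S⁻¹ * B γ := by rw [mul_assoc, mul_assoc, mul_nonsing_inv _ hdet, mul_one]
  have hproj : (B γ)ᴴ * S⁻¹ * B γ = B γ := by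
    rw [(hB γ).eq, hcomm, mul_assoc, ← hSB, ← mul_assoc, nonsing_inv_mul _ hdet, one_mul]
  simpa only [hproj] using hS.inv.posSemidef.conjTranspose_mul_mul_same (B γ)

section RankOneForm

variable {n N : ℕ}

lemma QF_sum {ι : Type*} [Fintype ι] (A : ι → Fin N → Fin n → Fin N → Fin n → ℝ)
    (η : Fin N → ℝ) (a : Fin n → ℝ) : QF (∑ γ, A γ) η a = ∑ γ, QF (A γ) η a := by
  simp only [QF, Finset.sum_apply, Finset.sum_mul]
  symm
  rw [Finset.sum_comm]
  refine Finset.sum_congr rfl fun α _ => ?_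
  rw [Finset.sum_comm]
  refine Finset.sum_congr rfl fun i _ => ?_
  rw [Finset.sum_comm]
  refine Finset.sum_congr rfl fun β _ => ?_
  rw [Finset.sum_comm]

lemma QF_kronecker (B : Matrix (Fin N) (Fin N) ℝ) (M : Matrix (Fin n) (Fin n) ℝ)
    (η : Fin N → ℝ) (a : Fin n → ℝ) :
    QF (fun α i β j => B α β * M i j) η a = (η ⬝ᵥ B *ᵥ η) * (a ⬝ᵥ M *ᵥ a) := by
  rw [dotProduct, dotProduct, Finset.sum_mul_sum]
  refine Finset.sum_congr rfl fun α _ => Finset.sum_congr rfl fun i _ => ?_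
  simp only [mulVec, dotProduct, Finset.mul_sum, Finset.sum_mul]
  rw [Finset.sum_comm]
  exact Finset.sum_congr rfl fun j _ => Finset.sum_congr rfl fun β _ => by ring

variable {A : Fin N → Fin n → Fin N → Fin n → ℝ}

lemma nuA_le_QF {c : ℝ} (hc : ∀ η a, vsq η = 1 → vsq a = 1 → c ≤ QF A η a)
    {η : Fin N → ℝ} {a : Fin n → ℝ} (hη : vsq η = 1) (ha : vsq a = 1) : nuA A ≤ QF A η a :=
  csInf_le ⟨c, by rintro _ ⟨η, a, hη, ha, rfl⟩; exact hc η a hη ha⟩ ⟨η, a, hη, ha, rfl⟩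

lemma le_nuA {c : ℝ} {η₀ : Fin N → ℝ} {a₀ : Fin n → ℝ} (hη₀ : vsq η₀ = 1) (ha₀ : vsq a₀ = 1)
    (hc : ∀ η a, vsq η = 1 → vsq a = 1 → c ≤ QF A η a) : c ≤ nuA A :=
  le_csInf ⟨_, η₀, a₀, hη₀, ha₀, rfl⟩ <| by rintro _ ⟨η, a, hη, ha, rfl⟩; exact hc η a hη ha

variable {B : Fin N → Matrix (Fin N) (Fin N) ℝ} {M : Fin N → Matrix (Fin n) (Fin n) ℝ}

lemma QF_eq_sum_mul (hA : ∀ α i β j, A α i β j = ∑ γ, B γ α β * M γ i j)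
    (η : Fin N → ℝ) (a : Fin n → ℝ) :
    QF A η a = ∑ γ, (η ⬝ᵥ B γ *ᵥ η) * (a ⬝ᵥ M γ *ᵥ a) := by
  have hA' : A = ∑ γ, fun α i β j => B γ α β * M γ i j := by
    ext
    simp [hA, Finset.sum_apply]
  simp only [hA', QF_sum, QF_kronecker]

lemma mul_dotProduct_le_QF (hA : ∀ α i β j, A α i β j = ∑ γ, B γ α β * M γ i j)
    (hB : ∀ γ, (B γ).PosSemidef) {c : ℝ} {a : Fin n → ℝ} (hM : ∀ γ, c ≤ a ⬝ᵥ M γ *ᵥ a)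
    (η : Fin N → ℝ) : c * (η ⬝ᵥ (∑ γ, B γ) *ᵥ η) ≤ QF A η a := by
  rw [QF_eq_sum_mul hA, sum_mulVec, dotProduct_sum, Finset.mul_sum]
  refine Finset.sum_le_sum fun γ _ => ?_
  rw [mul_comm]
  exact mul_le_mul_of_nonneg_left (hM γ) ((hB γ).dotProduct_mulVec_nonneg η)

lemma QF_eq_mul_of_dotProduct_mulVec_eq (hA : ∀ α i β j, A α i β j = ∑ γ, B γ α β * M γ i j)
    {c : ℝ} {a : Fin n → ℝ} (hM : ∀ γ, a ⬝ᵥ M γ *ᵥ a = c) (η : Fin N → ℝ) :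
    QF A η a = c * (η ⬝ᵥ (∑ γ, B γ) *ᵥ η) := by
  rw [QF_eq_sum_mul hA, sum_mulVec, dotProduct_sum, Finset.mul_sum]
  simp only [hM, mul_comm]

end RankOneForm

theorem ellipticity_constant_formula_general
    {n N : ℕ} (hN : 0 < N)
    (A : Fin N → Fin n → Fin N → Fin n → ℝ)
    (B : Fin N → Matrix (Fin N) (Fin N) ℝ)
    (M : Fin N → Matrix (Fin n) (Fin n) ℝ)
    (hSH : SHdata A B M)
    (l1 : ℝ) (hl1 : ∀ γ, lam1 (M γ) = l1)
    (abar : Fin n → ℝ) (habar : vsq abar = 1)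
    (heig : ∀ γ, (M γ).mulVec abar = l1 • abar) :
    nuA A =
      (Finset.univ.inf' ⟨⟨0, hN⟩, Finset.mem_univ _⟩ fun γ => lam1 (M γ)) *
        lam1 (∑ γ, B γ) ∧
    nuA A = l1 * lam1 (∑ γ, B γ) := by
  obtain ⟨hBsymm, -, hA, hOrth, hS, hMpd, -⟩ := hSH
  have hB : ∀ γ, (B γ).PosSemidef :=
    posSemidef_of_pairwise_mul_eq_zero (fun γ => isHermitian_iff_isSymm.2 (hBsymm γ))
      (fun γ δ h => mul_eq_zero_of_mulVec_orthogonal (hBsymm γ) (hOrth γ δ h)) hS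
  have habar_eig : ∀ γ, abar ⬝ᵥ M γ *ᵥ abar = l1 := fun γ => by
    rw [heig, dotProduct_smul, ← vsq_eq_dotProduct, habar, smul_eq_mul, mul_one]
  have hl1_pos : 0 < l1 :=
    habar_eig ⟨0, hN⟩ ▸ (hMpd _).dotProduct_mulVec_pos (ne_zero_of_vsq_eq_one habar)
  have hlower : ∀ η a, vsq η = 1 → vsq a = 1 → l1 * lam1 (∑ γ, B γ) ≤ QF A η a :=
    fun η a hη ha =>
      (mul_le_mul_of_nonneg_left (lam1_le_dotProduct_mulVec hS.posSemidef hη) hl1_pos.le).trans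
        (mul_dotProduct_le_QF hA hB
          (fun γ => hl1 γ ▸ lam1_le_dotProduct_mulVec (hMpd γ).posSemidef ha) η)
  obtain ⟨η₀, hη₀⟩ := exists_vsq_eq_one hN
  have hupper : nuA A / l1 ≤ lam1 (∑ γ, B γ) := le_lam1 hη₀ fun η hη => by
    rw [div_le_iff₀' hl1_pos, ← QF_eq_mul_of_dotProduct_mulVec_eq hA habar_eig]
    exact nuA_le_QF hlower hη habar
  have hnu : nuA A = l1 * lam1 (∑ γ, B γ) :=
    le_antisymm ((div_le_iff₀' hl1_pos).1 hupper) (le_nuA hη₀ habar hlower)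
  refine ⟨?_, hnu⟩
  rw [hnu]
  congr 1
  simp only [hl1]
  exact (Finset.inf'_const _ _).symm

/-- If `𝐀 = Σ_γ B^γ ⊗ A^γ` satisfies (SH) and in addition all the
positive definite matrices `A¹,…,A^N` have the same smallest eigenvalue `λ₁` with a
common unit eigenvector `ā`, then
`ν(𝐀) = (min_γ min_{|a|=1} A^γ:a⊗a) · min_{|η|=1}(B¹+⋯+B^N):η⊗η = λ₁·λ₁(B¹+⋯+B^N)`. -/
theorem ellipticity_constant_formula
    {n N : ℕ} (hn : 0 < n) (hN : 0 < N)
    (A : Fin N → Fin n → Fin N → Fin n → ℝ)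
    (B : Fin N → Matrix (Fin N) (Fin N) ℝ)
    (M : Fin N → Matrix (Fin n) (Fin n) ℝ)
    (hSH : SHdata A B M)
    (l1 : ℝ) (hl1 : ∀ γ, lam1 (M γ) = l1)
    (abar : Fin n → ℝ) (habar : vsq abar = 1)
    (heig : ∀ γ, (M γ).mulVec abar = l1 • abar) :
    nuA A =
      (Finset.univ.inf' ⟨⟨0, hN⟩, Finset.mem_univ _⟩ fun γ => lam1 (M γ)) *
        lam1 (∑ γ, B γ) ∧
    nuA A = l1 * lam1 (∑ γ, B γ) :=
  ellipticity_constant_formula_general hN A B M hSH l1 hl1 abar habar heig
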